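/- For every θ > 0, the number of leaves L_n^{(θ)} of a Hoppe tree with n nodes and parameter θ has variance Var(L_n^{(θ)}) = (θ + n − 1)/12 + O(1/n) as n → ∞; that is, n·(Var(L_n^{(θ)}) − (θ + n − 1)/12) is bounded in n. -/

import Mathlib

/-!
Node `j ≥ 2` of the tree with `n` nodes is a leaf iff none of the later nodes picks it as parent.
The parent choices are independent and node `t + 2` picks a given node of `{2, …, t + 1}` with
probability `1 / (θ + t)`, so the probability that `j` is a leaf is a telescoping product,
`(θ + j - 2) / (θ + n - 2)`; likewise two nodes `b < a` are both leaves with probability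
`(θ + b - 2) (θ + a - 3) / ((θ + n - 3) (θ + n - 2))`, and the root is never a leaf since
node `2` is its child. Summing over nodes and pairs of nodes gives `Var(L_n)` in closed form: it is
`(θ + n - 1) / 12` minus a rational function of `n` of order `n⁻²`, so that
`n (Var(L_n) - (θ + n - 1) / 12) → 0`.
-/

open MeasureTheory ProbabilityTheory Real Filter Topology

noncomputable section

/-- Depth of node `i` in the Hoppe tree grown from the parent choices `U`:
`U k ω` is the parent of node `k + 2` (a node in `{1, …, k + 1}`, almost surely);
node `1` is the root. The `min` clipping is irrelevant almost surely. -/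
def hoppeDepth {Ω : Type*} (U : ℕ → Ω → ℕ) (ω : Ω) : ℕ → ℕ
  | 0 => 0
  | 1 => 0
  | n + 2 => hoppeDepth U ω (min (U n ω) (n + 1)) + 1
  decreasing_by omega

/-- The parent choices of a Hoppe tree with parameter `θ`: `U k` is the (random) parent
of node `k + 2`, the choices being independent, node `k + 2` choosing its parent among
nodes `1, …, k + 1`, namely the root `1` with probability `θ / (θ + k)` and each other
node with probability `1 / (θ + k)`. -/
structure IsHoppeParents {Ω : Type*} [MeasurableSpace Ω] (θ : ℝ) (μ : Measure Ω)
    (U : ℕ → Ω → ℕ) : Prop where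
  meas : ∀ k, Measurable (U k)
  indep : iIndepFun U μ
  root : ∀ k : ℕ, μ {ω | U k ω = 1} = ENNReal.ofReal (θ / (θ + k))
  nonroot : ∀ k j : ℕ, 2 ≤ j → j ≤ k + 1 → μ {ω | U k ω = j} = ENNReal.ofReal (1 / (θ + k))
  range : ∀ k : ℕ, μ {ω | 1 ≤ U k ω ∧ U k ω ≤ k + 1} = 1

/-- Height of the Hoppe tree with `n` nodes: maximal depth over nodes `1, …, n`. -/
def hoppeHeight {Ω : Type*} (U : ℕ → Ω → ℕ) (ω : Ω) (n : ℕ) : ℕ :=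
  (Finset.Icc 1 n).sup (fun i => hoppeDepth U ω i)

/-- Internal path length of the Hoppe tree with `n` nodes: sum of the depths of
nodes `1, …, n`. -/
def hoppePathLength {Ω : Type*} (U : ℕ → Ω → ℕ) (ω : Ω) (n : ℕ) : ℕ :=
  ∑ i ∈ Finset.Icc 1 n, hoppeDepth U ω i

/-- Number of leaves of the Hoppe tree with `n` nodes: nodes `j ∈ {1, …, n}` that are
the parent of no node `k ∈ {2, …, n}`. -/
def hoppeLeafCount {Ω : Type*} (U : ℕ → Ω → ℕ) (ω : Ω) (n : ℕ) : ℕ :=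
  ((Finset.Icc 1 n).filter (fun j => ∀ k ∈ Finset.Icc (2 : ℕ) n, U (k - 2) ω ≠ j)).card


open Finset

lemma Finset.sum_range_sum_range_eq_diag_add {M : Type*} [AddCommMonoid M] (f : ℕ → ℕ → M)
    (m : ℕ) :
    ∑ i ∈ range m, ∑ j ∈ range m, f i j
      = ∑ i ∈ range m, f i i + ∑ k ∈ range m, ∑ i ∈ range k, (f i k + f k i) := by
  induction m with
  | zero => simp
  | succ m ih =>
    simp only [sum_range_succ, sum_add_distrib, ih]
    abel

lemma Finset.sum_Icc_one_eq_sum_range {M : Type*} [AddCommMonoid M] {f : ℕ → M} (hf : f 1 = 0)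
    (n : ℕ) : ∑ j ∈ Icc 1 n, f j = ∑ i ∈ range (n - 1), f (i + 2) := by
  cases n with
  | zero => simp
  | succ n =>
    rw [← Ico_add_one_right_eq_Icc, sum_Ico_eq_sum_range, Nat.add_sub_cancel, sum_range_succ',
      add_comm 1 0, hf, add_zero]
    exact sum_congr rfl fun i _ => by rw [add_comm 1, add_assoc]

lemma ProbabilityTheory.variance_sum_indicator_one {Ω ι : Type*} [MeasurableSpace Ω]
    {μ : Measure Ω} [IsProbabilityMeasure μ] (s : Finset ι) {A : ι → Set Ω}
    (hA : ∀ i, MeasurableSet (A i)) :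
    Var[fun ω => ∑ i ∈ s, (A i).indicator 1 ω; μ]
      = ∑ i ∈ s, ∑ j ∈ s, μ.real (A i ∩ A j) - (∑ i ∈ s, μ.real (A i)) ^ 2 := by
  have hint : ∀ i j, Integrable ((A i ∩ A j).indicator (1 : Ω → ℝ)) μ := fun i j =>
    (integrable_const 1).indicator ((hA i).inter (hA j))
  have hL2 : ∀ i, MemLp ((A i).indicator (1 : Ω → ℝ)) 2 μ := fun i =>
    memLp_indicator_const 2 (hA i) 1 (Or.inr (measure_ne_top μ _))
  rw [variance_eq_sub (memLp_finsetSum s fun i _ => hL2 i)]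
  have hsq : (fun ω => ∑ i ∈ s, (A i).indicator (1 : Ω → ℝ) ω) ^ 2
      = fun ω => ∑ i ∈ s, ∑ j ∈ s, (A i ∩ A j).indicator 1 ω := by
    ext ω
    simp only [Pi.pow_apply, sq, sum_mul_sum, Set.inter_indicator_one, Pi.mul_apply]
  rw [hsq, integral_finsetSum _ fun i _ => integrable_finsetSum _ fun j _ => hint i j,
    integral_finsetSum _ fun i _ => (hL2 i).integrable one_le_two]
  simp only [integral_finsetSum _ fun j _ => hint _ j, integral_indicator_one (hA _),
    integral_indicator_one ((hA _).inter (hA _))]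

lemma prod_one_sub_card_filter_singleton {θ : ℝ} (hθ : 0 < θ) {l m : ℕ} (hlm : l < m) :
    ∏ t ∈ range m, (1 - #{j ∈ {l + 2} | j ≤ t + 1} / (θ + t))
      = (θ + l) / (θ + m - 1) := by
  induction m, Nat.succ_le_of_lt hlm using Nat.le_induction with
  | base =>
    rw [prod_eq_one fun t ht => by
      simp [filter_singleton, show ¬l + 2 ≤ t + 1 by simp at ht; omega]]
    push_cast
    rw [add_sub_assoc, add_sub_cancel_right, div_self (by positivity)]
  | succ m hm ih =>
    rw [prod_range_succ, ih (by omega), filter_singleton, if_pos (by omega), card_singleton]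
    have : (1 : ℝ) ≤ m := by exact_mod_cast (show 1 ≤ m by omega)
    have h1 : θ + m - 1 ≠ 0 := by linarith
    have h2 : θ + m ≠ 0 := by linarith
    push_cast
    rw [show θ + ((m : ℝ) + 1) - 1 = θ + m by ring]
    field_simp

lemma prod_one_sub_card_filter_pair {θ : ℝ} (hθ : 0 < θ) {i k m : ℕ} (hik : i < k)
    (hkm : k < m) :
    ∏ t ∈ range m, (1 - #{j ∈ {i + 2, k + 2} | j ≤ t + 1} / (θ + t))
      = (θ + i) * (θ + k - 1) / ((θ + m - 2) * (θ + m - 1)) := by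
  have : (1 : ℝ) ≤ k := by exact_mod_cast (show 1 ≤ k by omega)
  induction m, Nat.succ_le_of_lt hkm using Nat.le_induction with
  | base =>
    have hfilter : ∀ t ∈ range (k + 1),
        filter (· ≤ t + 1) {i + 2, k + 2} = filter (· ≤ t + 1) {i + 2} := fun t ht => by
      ext j
      simp only [mem_range] at ht
      simp only [mem_filter, mem_insert, mem_singleton]
      omega
    rw [prod_congr rfl fun t ht => by rw [hfilter t ht],
      prod_one_sub_card_filter_singleton hθ (hik.trans (Nat.lt_succ_self k))]
    have h1 : θ + k - 1 ≠ 0 := by linarith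
    have h2 : θ + k ≠ 0 := by linarith
    push_cast
    rw [show θ + ((k : ℝ) + 1) - 2 = θ + k - 1 by ring,
      show θ + ((k : ℝ) + 1) - 1 = θ + k by ring]
    field_simp
  | succ m hm ih =>
    rw [prod_range_succ, ih (by omega), filter_true_of_mem fun j hj => by
      simp only [mem_insert, mem_singleton] at hj; omega, card_pair (by omega)]
    have : (k : ℝ) + 1 ≤ m := by exact_mod_cast hm
    have h1 : θ + m - 2 ≠ 0 := by linarith
    have h2 : θ + m - 1 ≠ 0 := by linarith
    have h3 : θ + m ≠ 0 := by linarith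
    push_cast
    rw [show θ + ((m : ℝ) + 1) - 2 = θ + m - 1 by ring,
      show θ + ((m : ℝ) + 1) - 1 = θ + m by ring]
    field_simp

lemma sum_range_const_add_natCast (θ : ℝ) (m : ℕ) :
    ∑ l ∈ range m, (θ + l) = m * θ + m * (m - 1) / 2 := by
  induction m with
  | zero => simp
  | succ m ih =>
    rw [sum_range_succ, ih]
    push_cast
    ring

lemma sum_range_sum_range_const_add_natCast_mul (θ : ℝ) (m : ℕ) :
    ∑ k ∈ range m, ∑ i ∈ range k, (θ + i) * (θ + k - 1)
      = m * (m - 1) * (3 * m ^ 2 + (12 * θ - 11) * m + 12 * θ ^ 2 - 24 * θ + 10) / 24 := by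
  induction m with
  | zero => simp
  | succ m ih =>
    rw [sum_range_succ, ih, ← sum_mul, sum_range_const_add_natCast]
    push_cast
    ring

lemma tendsto_mul_natCast_add_div_natCast_add (a b c : ℝ) :
    Tendsto (fun m : ℕ => (a * m + b) / (m + c)) atTop (𝓝 a) := by
  have hden : Tendsto (fun m : ℕ => (m : ℝ) + c) atTop atTop :=
    tendsto_atTop_add_const_right _ c tendsto_natCast_atTop_atTop
  have hlim : Tendsto (fun m : ℕ => a + (b - a * c) * ((m : ℝ) + c)⁻¹) atTop (𝓝 a) := by
    simpa using tendsto_const_nhds.add (hden.inv_tendsto_atTop.const_mul (b - a * c))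
  refine hlim.congr' ?_
  filter_upwards [hden.eventually_gt_atTop 0] with m hm
  field_simp
  ring

lemma tendsto_natCast_succ_mul_div_cubic (θ a b : ℝ) :
    Tendsto (fun m : ℕ => (m + 1) * (θ * (θ - 1) * (a * m + b)
      / (12 * (θ + m - 1) ^ 2 * (θ + m - 2)))) atTop (𝓝 0) := by
  have hlim := (((tendsto_mul_natCast_add_div_natCast_add 1 1 (θ - 1)).const_mul
    (θ * (θ - 1) / 12)).mul (tendsto_mul_natCast_add_div_natCast_add a b (θ - 1))).mul
    (tendsto_mul_natCast_add_div_natCast_add 0 1 (θ - 2))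
  rw [mul_zero] at hlim
  refine hlim.congr' ?_
  filter_upwards [eventually_gt_atTop ⌈2 - θ⌉₊] with m hm
  have hm' : 2 - θ < m := Nat.lt_of_ceil_lt hm
  have h1 : θ + m - 1 ≠ 0 := by linarith
  have h2 : θ + m - 2 ≠ 0 := by linarith
  rw [add_sub_assoc', add_sub_assoc', add_comm (m : ℝ) θ]
  field_simp
  ring

-- `U i` is the parent of node `i + 2`: no node of `T` has a child among the nodes `2, …, m + 1`.
def childlessEvent {Ω : Type*} (U : ℕ → Ω → ℕ) (m : ℕ) (T : Finset ℕ) : Set Ω :=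
  {ω | ∀ i < m, U i ω ∉ T}

lemma childlessEvent_eq_biInter {Ω : Type*} (U : ℕ → Ω → ℕ) (m : ℕ) (T : Finset ℕ) :
    childlessEvent U m T = ⋂ i ∈ range m, U i ⁻¹' (↑T)ᶜ := by
  ext ω
  simp [childlessEvent]

lemma childlessEvent_inter {Ω : Type*} (U : ℕ → Ω → ℕ) (m : ℕ) (S T : Finset ℕ) :
    childlessEvent U m S ∩ childlessEvent U m T = childlessEvent U m (S ∪ T) := by
  ext ω
  simp [childlessEvent, imp_and, forall_and]

lemma hoppeLeafCount_eq_sum_indicator {Ω : Type*} (U : ℕ → Ω → ℕ) (ω : Ω) (n : ℕ) :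
    (hoppeLeafCount U ω n : ℝ)
      = ∑ j ∈ Icc 1 n, (childlessEvent U (n - 1) {j}).indicator 1 ω := by
  have hleaf : ∀ j,
      (∀ k ∈ Icc 2 n, U (k - 2) ω ≠ j) ↔ ω ∈ childlessEvent U (n - 1) {j} := by
    intro j
    simp only [childlessEvent, Set.mem_ofPred_eq, mem_singleton, mem_Icc]
    exact ⟨fun h i hi => by simpa using h (i + 2) (by omega),
      fun h k hk => by simpa [Nat.sub_add_cancel hk.1] using h (k - 2) (by omega)⟩
  rw [hoppeLeafCount, card_filter]
  push_cast
  refine sum_congr rfl fun j _ => ?_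
  classical
  rw [Set.indicator_apply]
  exact if_congr (hleaf j) rfl rfl

namespace IsHoppeParents

variable {Ω : Type*} [MeasurableSpace Ω] {θ : ℝ} {μ : Measure Ω} {U : ℕ → Ω → ℕ}

lemma measurableSet_childlessEvent (hU : IsHoppeParents θ μ U) (m : ℕ) (T : Finset ℕ) :
    MeasurableSet (childlessEvent U m T) := by
  rw [childlessEvent_eq_biInter]
  exact Finset.measurableSet_biInter _ fun i _ => hU.meas i T.measurableSet.compl

variable [IsProbabilityMeasure μ]

lemma ae_mem_Icc (hU : IsHoppeParents θ μ U) (i : ℕ) :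
    ∀ᵐ ω ∂μ, U i ω ∈ Set.Icc 1 (i + 1) := by
  rw [ae_iff_measure_eq (hU.meas i measurableSet_Icc).nullMeasurableSet, measure_univ]
  exact hU.range i

lemma ae_eq_one (hU : IsHoppeParents θ μ U) (hθ : θ ≠ 0) : ∀ᵐ ω ∂μ, U 0 ω = 1 := by
  have hs : MeasurableSet {ω | U 0 ω = 1} := hU.meas 0 (measurableSet_singleton 1)
  rw [ae_iff_measure_eq hs.nullMeasurableSet, measure_univ, hU.root 0, Nat.cast_zero, add_zero,
    div_self hθ, ENNReal.ofReal_one]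

lemma measureReal_eq (hU : IsHoppeParents θ μ U) (hθ : 0 ≤ θ) (i : ℕ) {j : ℕ}
    (hj : 2 ≤ j) :
    μ.real {ω | U i ω = j} = if j ≤ i + 1 then (θ + i)⁻¹ else 0 := by
  split_ifs with hji
  · rw [measureReal_def, hU.nonroot i j hj hji, ENNReal.toReal_ofReal (by positivity), one_div]
  · rw [measureReal_def, measure_eq_zero_iff_ae_notMem.2 ?_, ENNReal.toReal_zero]
    filter_upwards [hU.ae_mem_Icc i] with ω hω
    exact fun h => hji (h ▸ hω.2)

lemma measureReal_notMem (hU : IsHoppeParents θ μ U) (hθ : 0 ≤ θ) (i : ℕ) {T : Finset ℕ}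
    (hT : ∀ j ∈ T, 2 ≤ j) :
    μ.real {ω | U i ω ∉ T} = 1 - #{j ∈ T | j ≤ i + 1} / (θ + i) := by
  have hunion : {ω | U i ω ∉ T} = (⋃ j ∈ T, {ω | U i ω = j})ᶜ := by ext; simp
  have hmeas : ∀ j ∈ T, MeasurableSet {ω | U i ω = j} := fun j _ =>
    hU.meas i (measurableSet_singleton j)
  have hdisj : Set.PairwiseDisjoint (T : Set ℕ) fun j => {ω | U i ω = j} := fun j _ k _ hjk =>
    Set.disjoint_left.2 fun ω hj hk => hjk (hj.symm.trans hk)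
  rw [hunion, measureReal_compl (Finset.measurableSet_biUnion T hmeas),
    measureReal_biUnion_finset hdisj hmeas, probReal_univ,
    sum_congr rfl fun j hj => hU.measureReal_eq hθ i (hT j hj), ← sum_filter, sum_const,
    nsmul_eq_mul, div_eq_mul_inv]

lemma measureReal_childlessEvent (hU : IsHoppeParents θ μ U) (hθ : 0 ≤ θ) (m : ℕ)
    {T : Finset ℕ} (hT : ∀ j ∈ T, 2 ≤ j) :
    μ.real (childlessEvent U m T)
      = ∏ i ∈ Finset.range m, (1 - #{j ∈ T | j ≤ i + 1} / (θ + i)) := by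
  rw [childlessEvent_eq_biInter, measureReal_def,
    hU.indep.meas_biInter fun i _ => ⟨_, T.measurableSet.compl, rfl⟩, ENNReal.toReal_prod]
  exact prod_congr rfl fun i _ => hU.measureReal_notMem hθ i hT

lemma measure_childlessEvent_of_one_mem (hU : IsHoppeParents θ μ U) (hθ : θ ≠ 0) {m : ℕ}
    (hm : 1 ≤ m) {T : Finset ℕ} (hT : 1 ∈ T) : μ (childlessEvent U m T) = 0 := by
  rw [measure_eq_zero_iff_ae_notMem]
  filter_upwards [hU.ae_eq_one hθ] with ω hω hleaf
  exact hleaf 0 hm (hω ▸ hT)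

lemma measureReal_childlessEvent_singleton (hU : IsHoppeParents θ μ U) (hθ : 0 < θ) {l m : ℕ}
    (hlm : l < m) : μ.real (childlessEvent U m {l + 2}) = (θ + l) / (θ + m - 1) := by
  rw [hU.measureReal_childlessEvent hθ.le m (by simp)]
  exact prod_one_sub_card_filter_singleton hθ hlm

lemma measureReal_childlessEvent_pair (hU : IsHoppeParents θ μ U) (hθ : 0 < θ) {i k m : ℕ}
    (hik : i < k) (hkm : k < m) :
    μ.real (childlessEvent U m {i + 2, k + 2})
      = (θ + i) * (θ + k - 1) / ((θ + m - 2) * (θ + m - 1)) := by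
  rw [hU.measureReal_childlessEvent hθ.le m (by simp)]
  exact prod_one_sub_card_filter_pair hθ hik hkm

lemma variance_hoppeLeafCount_succ_eq_sum (hU : IsHoppeParents θ μ U) (hθ : θ ≠ 0) {m : ℕ}
    (hm : 1 ≤ m) :
    Var[fun ω => (hoppeLeafCount U ω (m + 1) : ℝ); μ]
      = ∑ l ∈ Finset.range m, μ.real (childlessEvent U m {l + 2})
        + 2 * ∑ k ∈ Finset.range m, ∑ i ∈ Finset.range k,
            μ.real (childlessEvent U m {i + 2, k + 2})
        - (∑ l ∈ Finset.range m, μ.real (childlessEvent U m {l + 2})) ^ 2 := by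
  have hroot : ∀ T : Finset ℕ, 1 ∈ T → μ.real (childlessEvent U m T) = 0 := fun T hT => by
    rw [measureReal_def, hU.measure_childlessEvent_of_one_mem hθ hm hT, ENNReal.toReal_zero]
  simp_rw [hoppeLeafCount_eq_sum_indicator, Nat.add_sub_cancel]
  rw [variance_sum_indicator_one _ fun j => hU.measurableSet_childlessEvent m {j}]
  simp_rw [childlessEvent_inter]
  rw [sum_Icc_one_eq_sum_range (sum_eq_zero fun b _ => hroot _ (by simp)),
    sum_Icc_one_eq_sum_range (hroot _ (mem_singleton_self 1)), Nat.add_sub_cancel,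
    sum_congr rfl fun a _ => sum_Icc_one_eq_sum_range (hroot _ (by simp)) _, Nat.add_sub_cancel,
    sum_range_sum_range_eq_diag_add]
  simp only [union_self, ← insert_eq, mul_sum]
  congr 2
  exact sum_congr rfl fun k _ => sum_congr rfl fun i _ => by rw [pair_comm, two_mul]

lemma variance_hoppeLeafCount_succ (hU : IsHoppeParents θ μ U) (hθ : 0 < θ) {m : ℕ}
    (hm : 2 ≤ m) :
    Var[fun ω => (hoppeLeafCount U ω (m + 1) : ℝ); μ]
      = (θ + m) / 12
        - θ * (θ - 1) * (2 * (2 * θ - 1) * m + (θ - 1) * (θ - 2))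
          / (12 * (θ + m - 1) ^ 2 * (θ + m - 2)) := by
  have hpair : ∀ k ∈ Finset.range m,
      ∑ i ∈ Finset.range k, μ.real (childlessEvent U m {i + 2, k + 2})
      = (∑ i ∈ Finset.range k, (θ + i) * (θ + k - 1)) / ((θ + m - 2) * (θ + m - 1)) :=
    fun k hk => by
      rw [sum_div]
      exact sum_congr rfl fun i hi =>
        hU.measureReal_childlessEvent_pair hθ (mem_range.1 hi) (mem_range.1 hk)
  rw [hU.variance_hoppeLeafCount_succ_eq_sum hθ.ne' (by omega),
    sum_congr rfl fun l hl => hU.measureReal_childlessEvent_singleton hθ (mem_range.1 hl),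
    ← sum_div, sum_range_const_add_natCast, sum_congr rfl hpair, ← sum_div,
    sum_range_sum_range_const_add_natCast_mul]
  have : (2 : ℝ) ≤ m := by exact_mod_cast hm
  have h1 : θ + m - 1 ≠ 0 := by linarith
  have h2 : θ + m - 2 ≠ 0 := by linarith
  field_simp
  ring

end IsHoppeParents

/-- Variance of the number of leaves of a Hoppe tree:
`Var(L_n) = (θ + n - 1)/12 + O(1/n)`. -/
theorem hoppe_leaves_variance
    {Ω : Type*} [MeasurableSpace Ω]
    (θ : ℝ) (hθ : 0 < θ)
    (μ : Measure Ω) [IsProbabilityMeasure μ] (U : ℕ → Ω → ℕ) (hU : IsHoppeParents θ μ U) :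
    ∃ C : ℝ, ∀ n : ℕ, 1 ≤ n →
      (n : ℝ) * |variance (fun ω => (hoppeLeafCount U ω n : ℝ)) μ
          - (θ + (n : ℝ) - 1) / 12| ≤ C := by
  have hlim : Tendsto (fun n : ℕ => (n : ℝ)
      * |variance (fun ω => (hoppeLeafCount U ω n : ℝ)) μ - (θ + (n : ℝ) - 1) / 12|)
      atTop (𝓝 0) := by
    rw [← tendsto_add_atTop_iff_nat 1]
    have hrem :=
      (tendsto_natCast_succ_mul_div_cubic θ (2 * (2 * θ - 1)) ((θ - 1) * (θ - 2))).abs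
    rw [abs_zero] at hrem
    refine hrem.congr' ?_
    filter_upwards [eventually_ge_atTop 2] with m hm
    rw [hU.variance_hoppeLeafCount_succ hθ hm, abs_mul, abs_of_pos (by positivity), Nat.cast_succ,
      ← abs_neg]
    congr 2
    ring
  obtain ⟨C, hC⟩ := hlim.bddAbove_range
  exact ⟨C, fun n _ => hC ⟨n, rfl⟩⟩

end
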